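/- Let G be a finite simple graph without isolated vertices such that γ(G) = γ^∞(G) and every vertex of G has degree at most 3. Then there exists an eternal guard family F of size γ^∞(G) in G and a set D ∈ F such that the external private neighborhood epn(v,D) is nonempty for every v ∈ D. -/

import Mathlib

variable {V : Type*}

/-- `D` is a dominating set of `G`: every vertex outside `D` has a neighbor in `D`. -/
def Dominates (G : SimpleGraph V) (D : Finset V) : Prop :=
  ∀ v : V, v ∉ D → ∃ u ∈ D, G.Adj u v

/-- The domination number `γ(G)`. -/
noncomputable def domNum (G : SimpleGraph V) : ℕ :=
  sInf {k | ∃ D : Finset V, Dominates G D ∧ D.card = k}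

/-- An eternal guard family of size `k` in `G`. -/
def IsEternalGuardFamily [DecidableEq V] (G : SimpleGraph V) (k : ℕ)
    (F : Set (Finset V)) : Prop :=
  F.Nonempty ∧ (∀ D ∈ F, Dominates G D ∧ D.card = k) ∧
    ∀ D ∈ F, ∀ r : V, r ∉ D → ∃ v ∈ D, G.Adj v r ∧ insert r (D.erase v) ∈ F

/-- The eternal domination number `γ^∞(G)`. -/
noncomputable def eternalDomNum [DecidableEq V] (G : SimpleGraph V) : ℕ :=
  sInf {k | 1 ≤ k ∧ ∃ F : Set (Finset V), IsEternalGuardFamily G k F}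

/-- An m-eternal guard family of size `k` in `G`. -/
def IsMEternalGuardFamily (G : SimpleGraph V) (k : ℕ) (F : Set (Finset V)) : Prop :=
  F.Nonempty ∧ (∀ D ∈ F, Dominates G D ∧ D.card = k) ∧
    ∀ D ∈ F, ∀ r : V, r ∉ D → ∃ D' ∈ F, r ∈ D' ∧
      ∃ g : V → V, Set.BijOn g ↑D ↑D' ∧ ∀ v ∈ D, g v = v ∨ G.Adj v (g v)

/-- The m-eternal domination number `γ_m^∞(G)`. -/
noncomputable def mEternalDomNum (G : SimpleGraph V) : ℕ :=
  sInf {k | 1 ≤ k ∧ ∃ F : Set (Finset V), IsMEternalGuardFamily G k F}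

/-- `s` is an independent set of vertices of `G`. -/
def IsIndepFinset (G : SimpleGraph V) (s : Finset V) : Prop :=
  ∀ a ∈ s, ∀ b ∈ s, a ≠ b → ¬ G.Adj a b

/-- The independence number `α(G)`. -/
noncomputable def indepNum (G : SimpleGraph V) : ℕ :=
  sSup {k | ∃ s : Finset V, IsIndepFinset G s ∧ s.card = k}

/-- The clique covering number `θ(G)`: the least `t` such that the vertices can be
partitioned into `t` classes each inducing a complete subgraph. -/
noncomputable def cliqueCoverNum (G : SimpleGraph V) : ℕ :=
  sInf {t | ∃ f : V → Fin t, ∀ a b : V, f a = f b → a ≠ b → G.Adj a b}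

/-- The external private neighborhood of `v ∈ D` with respect to `D`: the neighbors of
`v` lying outside the closed neighborhood of `D \ {v}`. -/
def epn [DecidableEq V] (G : SimpleGraph V) (v : V) (D : Finset V) : Set V :=
  {u | G.Adj v u ∧ ∀ w ∈ D.erase v, u ≠ w ∧ ¬ G.Adj w u}


/-!
Take an eternal guard family `F` of size `γ^∞(G) = γ(G)`, so that all its members are minimum
dominating sets, and pick `D ∈ F` minimising, lexicographically, the number of guards without
an external private neighbour and then the number of guards with no neighbour in `D`.
If `epn(v, D) = ∅`, minimality of `D` forces `v` to have no neighbour in `D`, and every neighbour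
`r` of `v` is also dominated by some `d ≠ v`. As `deg r ≤ 3`, at most one vertex of `N(r)` lies
outside `D ∪ {v}`, so after the attack at `r` and any response from a guard `u`, at most one
guard of `D` loses all its private neighbours, while `r` and `v` (if still present) have
neighbours among the guards and hence private neighbours. If `u ≠ v`, the removed guard `u`
pays for that loss; if `u = v`, the first count does not grow and the isolated guard `v` is
gone. Either way the potential drops, contradicting the choice of `D`.
-/

def IsMinDominating (G : SimpleGraph V) (D : Finset V) : Prop :=
  Dominates G D ∧ ∀ E : Finset V, Dominates G E → D.card ≤ E.card

lemma IsMinDominating.of_card_eq_domNum {G : SimpleGraph V} {D : Finset V}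
    (hD : Dominates G D) (hcard : D.card = domNum G) : IsMinDominating G D :=
  ⟨hD, fun E hE => hcard ▸ Nat.sInf_le ⟨E, hE, rfl⟩⟩

section PrivateNeighbors

variable [DecidableEq V] {G : SimpleGraph V}

lemma notMem_of_mem_epn {D : Finset V} {w t : V} (ht : t ∈ epn G w D) : t ∉ D := fun htD =>
  (ht.2 t (Finset.mem_erase.mpr ⟨(G.ne_of_adj ht.1).symm, htD⟩)).1 rfl

lemma eq_of_mem_epn_of_mem_epn {D : Finset V} {a b t : V} (hb : b ∈ D)
    (ha : t ∈ epn G a D) (hb' : t ∈ epn G b D) : a = b := by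
  by_contra hab
  exact (ha.2 b (Finset.mem_erase.mpr ⟨Ne.symm hab, hb⟩)).2 hb'.1

lemma epn_eq_empty_of_notMem {E : Finset V} {u : V} (hE : Dominates G E) (hu : u ∉ E) :
    epn G u E = ∅ := by
  refine Set.eq_empty_iff_forall_notMem.mpr fun t ht => ?_
  obtain ⟨-, ht⟩ := ht
  rw [Finset.erase_eq_of_notMem hu] at ht
  by_cases htE : t ∈ E
  · exact (ht t htE).1 rfl
  · obtain ⟨s, hsE, hst⟩ := hE t htE
    exact (ht s hsE).2 hst

lemma eq_or_adj_of_mem_epn_of_notMem_epn_insert_erase {D : Finset V} {u r w t : V}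
    (ht : t ∈ epn G w D) (ht' : t ∉ epn G w (insert r (D.erase u))) :
    t = r ∨ G.Adj r t := by
  obtain ⟨w', hw', hw't⟩ :
      ∃ w' ∈ (insert r (D.erase u)).erase w, t = w' ∨ G.Adj w' t := by
    by_contra! h
    exact ht' ⟨ht.1, h⟩
  obtain ⟨hw'w, hw'D'⟩ := Finset.mem_erase.mp hw'
  rcases Finset.mem_insert.mp hw'D' with rfl | hw'D
  · exact hw't
  · have := ht.2 w' (Finset.mem_erase.mpr ⟨hw'w, Finset.mem_of_mem_erase hw'D⟩)
    tauto

lemma Dominates.erase_of_epn_eq_empty {D : Finset V} {v w : V} (hD : Dominates G D)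
    (hbad : epn G v D = ∅) (hw : w ∈ D) (hvw : G.Adj v w) : Dominates G (D.erase v) := by
  intro y hy
  by_contra! hno
  by_cases hyv : y = v
  · subst hyv
    exact hno w (Finset.mem_erase.mpr ⟨(G.ne_of_adj hvw).symm, hw⟩) hvw.symm
  · have hyD : y ∉ D := fun h => hy (Finset.mem_erase.mpr ⟨hyv, h⟩)
    obtain ⟨t, htD, hty⟩ := hD y hyD
    obtain rfl : t = v := by
      by_contra htv
      exact hno t (Finset.mem_erase.mpr ⟨htv, htD⟩) hty
    have hy : y ∈ epn G t D := ⟨hty, fun w' hw' =>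
      ⟨fun h => hyD (h ▸ Finset.mem_of_mem_erase hw'), hno w' hw'⟩⟩
    simp [hbad] at hy

end PrivateNeighbors

namespace IsMinDominating

variable [DecidableEq V] {G : SimpleGraph V} {D : Finset V} {u v r : V}

lemma epn_nonempty_of_adj (hD : IsMinDominating G D) {w : V} (hv : v ∈ D) (hw : w ∈ D)
    (hvw : G.Adj v w) : (epn G v D).Nonempty := by
  refine Set.nonempty_iff_ne_empty.mpr fun hbad => ?_
  exact (Finset.card_erase_lt_of_mem hv).not_ge
    (hD.2 _ (hD.1.erase_of_epn_eq_empty hbad hw hvw))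

lemma not_adj_of_epn_eq_empty (hD : IsMinDominating G D) {w : V} (hv : v ∈ D)
    (hbad : epn G v D = ∅) (hw : w ∈ D) : ¬ G.Adj v w := fun hvw =>
  (hD.epn_nonempty_of_adj hv hw hvw).ne_empty hbad

lemma notMem_of_adj_of_epn_eq_empty (hD : IsMinDominating G D) (hv : v ∈ D)
    (hbad : epn G v D = ∅) (hr : G.Adj v r) : r ∉ D := fun hrD =>
  hD.not_adj_of_epn_eq_empty hv hbad hrD hr

lemma exists_adj_ne_of_epn_eq_empty (hD : IsMinDominating G D) (hv : v ∈ D)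
    (hbad : epn G v D = ∅) (hr : G.Adj v r) : ∃ d ∈ D, d ≠ v ∧ G.Adj d r := by
  have hrD := hD.notMem_of_adj_of_epn_eq_empty hv hbad hr
  by_contra! h
  have hr' : r ∈ epn G v D := ⟨hr, fun w hw =>
    ⟨fun e => hrD (e ▸ Finset.mem_of_mem_erase hw),
      h w (Finset.mem_of_mem_erase hw) (Finset.ne_of_mem_erase hw)⟩⟩
  simp [hbad] at hr'

lemma insert_erase (hD : IsMinDominating G D) (hu : u ∈ D) (hrD : r ∉ D)
    (hD' : Dominates G (insert r (D.erase u))) : IsMinDominating G (insert r (D.erase u)) := by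
  refine ⟨hD', fun E hE => ?_⟩
  rw [Finset.card_insert_of_notMem fun h => hrD (Finset.mem_of_mem_erase h),
    Finset.card_erase_add_one hu]
  exact hD.2 E hE

end IsMinDominating

section Potential

variable (G : SimpleGraph V)

open scoped Classical in
noncomputable def isolatedFinset (E : Finset V) : Finset V :=
  E.filter fun w => ∀ y ∈ E, ¬ G.Adj w y

variable {G} in
lemma mem_isolatedFinset {E : Finset V} {w : V} :
    w ∈ isolatedFinset G E ↔ w ∈ E ∧ ∀ y ∈ E, ¬ G.Adj w y := by
  classical
  simp [isolatedFinset]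

variable [DecidableEq V]

open scoped Classical in
noncomputable def epnEmptyFinset (E : Finset V) : Finset V :=
  E.filter fun w => epn G w E = ∅

open scoped Classical in
noncomputable def lostEpnFinset (D D' : Finset V) : Finset V :=
  D.filter fun w => (epn G w D).Nonempty ∧ epn G w D' = ∅

noncomputable def guardPotential (E : Finset V) : ℕ ×ₗ ℕ :=
  toLex ((epnEmptyFinset G E).card, (isolatedFinset G E).card)

variable {G}

lemma mem_epnEmptyFinset {E : Finset V} {w : V} :
    w ∈ epnEmptyFinset G E ↔ w ∈ E ∧ epn G w E = ∅ := by
  classical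
  simp [epnEmptyFinset]

lemma mem_lostEpnFinset {D D' : Finset V} {w : V} :
    w ∈ lostEpnFinset G D D' ↔ w ∈ D ∧ (epn G w D).Nonempty ∧ epn G w D' = ∅ := by
  classical
  simp [lostEpnFinset]

end Potential

lemma card_neighborFinset_sdiff_add_two_le [Fintype V] [DecidableEq V] {G : SimpleGraph V}
    [DecidableRel G.Adj] {S : Finset V} {r a b : V} (hab : a ≠ b) (ha : a ∈ S) (hb : b ∈ S)
    (hra : G.Adj r a) (hrb : G.Adj r b) : (G.neighborFinset r \ S).card + 2 ≤ G.degree r := by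
  have hpair : {a, b} ⊆ G.neighborFinset r ∩ S := by
    simp [Finset.insert_subset_iff, ha, hb, hra, hrb]
  have := Finset.card_le_card hpair
  rw [Finset.card_pair hab] at this
  have hsplit := Finset.card_sdiff_add_card_inter (G.neighborFinset r) S
  rw [G.card_neighborFinset_eq_degree] at hsplit
  omega

section Swap

variable [DecidableEq V] {G : SimpleGraph V} {D : Finset V} {u v r : V}

lemma IsMinDominating.epnEmptyFinset_insert_erase_subset (hD : IsMinDominating G D)
    (hv : v ∈ D) (hbad : epn G v D = ∅) (hr : G.Adj v r) (hu : u ∈ D)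
    (hD' : Dominates G (insert r (D.erase u))) :
    epnEmptyFinset G (insert r (D.erase u)) ⊆
      ((epnEmptyFinset G D).erase v ∪ lostEpnFinset G D (insert r (D.erase u))).erase u := by
  set D' := insert r (D.erase u)
  have hrD := hD.notMem_of_adj_of_epn_eq_empty hv hbad hr
  have hmin' := hD.insert_erase hu hrD hD'
  have hrD' : r ∈ D' := Finset.mem_insert_self r _
  have hgood : ∀ x ∈ D', ∀ y ∈ D', G.Adj x y → (epn G x D').Nonempty :=
    fun x hx y hy hxy => hmin'.epn_nonempty_of_adj hx hy hxy
  have hr' : ∃ x ∈ D', G.Adj r x := by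
    by_cases huv : u = v
    · obtain ⟨d, hd, hdv, hdr⟩ := hD.exists_adj_ne_of_epn_eq_empty hv hbad hr
      exact ⟨d, Finset.mem_insert_of_mem (Finset.mem_erase.mpr ⟨huv ▸ hdv, hd⟩), hdr.symm⟩
    · exact ⟨v, Finset.mem_insert_of_mem (Finset.mem_erase.mpr ⟨Ne.symm huv, hv⟩), hr.symm⟩
  intro w hw
  obtain ⟨hwD', hwbad⟩ := mem_epnEmptyFinset.mp hw
  have hwr : w ≠ r := by
    rintro rfl
    obtain ⟨x, hx, hwx⟩ := hr'
    exact (hgood w hwD' x hx hwx).ne_empty hwbad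
  obtain ⟨hwu, hwD⟩ := Finset.mem_erase.mp ((Finset.mem_insert.mp hwD').resolve_left hwr)
  have hwv : w ≠ v := by
    rintro rfl
    exact (hgood w hwD' r hrD' hr).ne_empty hwbad
  refine Finset.mem_erase.mpr ⟨hwu, ?_⟩
  by_cases hwe : epn G w D = ∅
  · exact Finset.mem_union_left _
      (Finset.mem_erase.mpr ⟨hwv, mem_epnEmptyFinset.mpr ⟨hwD, hwe⟩⟩)
  · exact Finset.mem_union_right _
      (mem_lostEpnFinset.mpr ⟨hwD, Set.nonempty_iff_ne_empty.mpr hwe, hwbad⟩)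

lemma mem_epnEmptyFinset_union_lostEpnFinset (hu : u ∈ D) (hur : u ≠ r)
    (hD' : Dominates G (insert r (D.erase u))) :
    u ∈ epnEmptyFinset G D ∪ lostEpnFinset G D (insert r (D.erase u)) := by
  have hu' : epn G u (insert r (D.erase u)) = ∅ :=
    epn_eq_empty_of_notMem hD' (by simp [hur])
  by_cases hue : epn G u D = ∅
  · exact Finset.mem_union_left _ (mem_epnEmptyFinset.mpr ⟨hu, hue⟩)
  · exact Finset.mem_union_right _
      (mem_lostEpnFinset.mpr ⟨hu, Set.nonempty_iff_ne_empty.mpr hue, hu'⟩)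

lemma IsMinDominating.isolatedFinset_insert_erase_subset (hD : IsMinDominating G D)
    (hv : v ∈ D) (hbad : epn G v D = ∅) (hr : G.Adj v r) :
    isolatedFinset G (insert r (D.erase v)) ⊆ (isolatedFinset G D).erase v := by
  obtain ⟨d, hd, hdv, hdr⟩ := hD.exists_adj_ne_of_epn_eq_empty hv hbad hr
  intro w hw
  obtain ⟨hwD', hwiso⟩ := mem_isolatedFinset.mp hw
  have hwr : w ≠ r := by
    rintro rfl
    exact hwiso d (Finset.mem_insert_of_mem (Finset.mem_erase.mpr ⟨hdv, hd⟩)) hdr.symm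
  obtain ⟨hwv, hwD⟩ := Finset.mem_erase.mp ((Finset.mem_insert.mp hwD').resolve_left hwr)
  refine Finset.mem_erase.mpr ⟨hwv, mem_isolatedFinset.mpr ⟨hwD, fun y hy hwy => ?_⟩⟩
  by_cases hyv : y = v
  · exact hD.not_adj_of_epn_eq_empty hv hbad hwD (hyv ▸ hwy.symm)
  · exact hwiso y (Finset.mem_insert_of_mem (Finset.mem_erase.mpr ⟨hyv, hy⟩)) hwy

variable [Fintype V] [DecidableRel G.Adj]

lemma mem_neighborFinset_sdiff_of_notMem_epn_insert_erase {w t : V} (hv : v ∈ D)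
    (hr : G.Adj v r) (hwv : w ≠ v) (ht : t ∈ epn G w D)
    (ht' : t ∉ epn G w (insert r (D.erase u))) : t ∈ G.neighborFinset r \ insert v D := by
  have hvr : ¬ G.Adj v t := (ht.2 v (Finset.mem_erase.mpr ⟨hwv.symm, hv⟩)).2
  rcases eq_or_adj_of_mem_epn_of_notMem_epn_insert_erase ht ht' with rfl | hrt
  · exact absurd hr hvr
  · simp only [Finset.mem_sdiff, G.mem_neighborFinset, Finset.mem_insert, hrt, true_and]
    rintro (rfl | htD)
    · exact notMem_of_mem_epn ht hv
    · exact notMem_of_mem_epn ht htD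

/-- The private neighbours lost when the guard on `u` moves to `r` all lie in the set
`N(r) \ (D ∪ {v})`, which has at most one element when `deg r ≤ 3`; as private neighbours have
unique owners, at most one vertex of `D` loses all of them. -/
lemma IsMinDominating.card_lostEpnFinset_insert_erase_le_one (hD : IsMinDominating G D)
    (hv : v ∈ D) (hbad : epn G v D = ∅) (hr : G.Adj v r) (hdeg : G.degree r ≤ 3) :
    (lostEpnFinset G D (insert r (D.erase u))).card ≤ 1 := by
  obtain ⟨d, hd, hdv, hdr⟩ := hD.exists_adj_ne_of_epn_eq_empty hv hbad hr
  have hX : (G.neighborFinset r \ insert v D).card ≤ 1 := by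
    have := card_neighborFinset_sdiff_add_two_le hdv.symm (Finset.mem_insert_self v D)
      (Finset.mem_insert_of_mem hd) hr.symm hdr.symm
    omega
  have hlost : ∀ w ∈ lostEpnFinset G D (insert r (D.erase u)),
      ∃ t ∈ G.neighborFinset r \ insert v D, t ∈ epn G w D := by
    intro w hw
    obtain ⟨-, ⟨t, ht⟩, hw'⟩ := mem_lostEpnFinset.mp hw
    have hwv : w ≠ v := by
      rintro rfl
      simp [hbad] at ht
    have ht' : t ∉ epn G w (insert r (D.erase u)) := by
      rw [hw']
      exact Set.notMem_empty t
    exact ⟨t, mem_neighborFinset_sdiff_of_notMem_epn_insert_erase hv hr hwv ht ht', ht⟩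
  refine Finset.card_le_one.mpr fun a ha b hb => ?_
  obtain ⟨ta, hta, hta'⟩ := hlost a ha
  obtain ⟨tb, htb, htb'⟩ := hlost b hb
  obtain rfl := Finset.card_le_one.mp hX ta hta tb htb
  exact eq_of_mem_epn_of_mem_epn (mem_lostEpnFinset.mp hb).1 hta' htb'

lemma IsMinDominating.guardPotential_insert_erase_lt (hD : IsMinDominating G D) (hv : v ∈ D)
    (hbad : epn G v D = ∅) (hr : G.Adj v r) (hdeg : G.degree r ≤ 3) (hu : u ∈ D)
    (hD' : Dominates G (insert r (D.erase u))) :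
    guardPotential G (insert r (D.erase u)) < guardPotential G D := by
  rw [guardPotential, guardPotential, Prod.Lex.toLex_lt_toLex]
  have hsub := hD.epnEmptyFinset_insert_erase_subset hv hbad hr hu hD'
  have hlost := hD.card_lostEpnFinset_insert_erase_le_one (u := u) hv hbad hr hdeg
  have hvbad : v ∈ epnEmptyFinset G D := mem_epnEmptyFinset.mpr ⟨hv, hbad⟩
  have hbound : ((epnEmptyFinset G D).erase v ∪ lostEpnFinset G D (insert r (D.erase u))).card
      ≤ (epnEmptyFinset G D).card := by
    have := Finset.card_union_le ((epnEmptyFinset G D).erase v)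
      (lostEpnFinset G D (insert r (D.erase u)))
    have := Finset.card_erase_lt_of_mem hvbad
    omega
  by_cases huv : u = v
  · subst huv
    have hviso : u ∈ isolatedFinset G D :=
      mem_isolatedFinset.mpr ⟨hv, fun y hy => hD.not_adj_of_epn_eq_empty hv hbad hy⟩
    have h1 := (Finset.card_le_card hsub).trans (Finset.card_erase_le.trans hbound)
    have h2 := (Finset.card_le_card (hD.isolatedFinset_insert_erase_subset hv hbad hr)).trans_lt
      (Finset.card_erase_lt_of_mem hviso)
    omega
  · have hur : u ≠ r := fun h => hD.notMem_of_adj_of_epn_eq_empty hv hbad hr (h ▸ hu)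
    have hu' : u ∈ (epnEmptyFinset G D).erase v ∪ lostEpnFinset G D (insert r (D.erase u)) := by
      rcases Finset.mem_union.mp (mem_epnEmptyFinset_union_lostEpnFinset hu hur hD') with h | h
      · exact Finset.mem_union_left _ (Finset.mem_erase.mpr ⟨huv, h⟩)
      · exact Finset.mem_union_right _ h
    left
    exact (Finset.card_le_card hsub).trans_lt ((Finset.card_erase_lt_of_mem hu').trans_le hbound)

end Swap

section EternalGuardFamily

variable [Fintype V] [DecidableEq V] (G : SimpleGraph V)

lemma isEternalGuardFamily_univ : IsEternalGuardFamily G (Fintype.card V) {Finset.univ} := by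
  refine ⟨Set.singleton_nonempty _, ?_, ?_⟩ <;> rintro D rfl
  · exact ⟨fun v hv => absurd (Finset.mem_univ v) hv, Finset.card_univ⟩
  · exact fun r hr => absurd (Finset.mem_univ r) hr

lemma exists_isEternalGuardFamily_eternalDomNum :
    ∃ F, IsEternalGuardFamily G (eternalDomNum G) F := by
  rcases isEmpty_or_nonempty V with hV | hV
  · have hzero : eternalDomNum G = Fintype.card V := by
      rw [Fintype.card_eq_zero, eternalDomNum, Nat.sInf_eq_zero]
      refine Or.inr (Set.eq_empty_of_forall_notMem ?_)
      rintro k ⟨hk, F, ⟨D, hDF⟩, hF, -⟩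
      have := (hF D hDF).2 ▸ Finset.card_le_univ D
      simp at this
      omega
    exact ⟨_, hzero ▸ isEternalGuardFamily_univ G⟩
  · have hne : {k | 1 ≤ k ∧ ∃ F, IsEternalGuardFamily G k F}.Nonempty :=
      ⟨_, Fintype.card_pos, _, isEternalGuardFamily_univ G⟩
    exact (Nat.sInf_mem hne).2

end EternalGuardFamily

/-- if `G` has no isolated vertices, `γ(G) = γ^∞(G)`, and `Δ(G) ≤ 3`,
then `G` has a minimum eternal guard family containing a set `D` with
`epn(v, D) ≠ ∅` for every `v ∈ D`. -/
theorem stmt13 [Fintype V] [DecidableEq V] (G : SimpleGraph V) [DecidableRel G.Adj]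
    (hiso : ∀ v : V, 0 < G.degree v)
    (heq : domNum G = eternalDomNum G)
    (hΔ : ∀ v : V, G.degree v ≤ 3) :
    ∃ F : Set (Finset V), IsEternalGuardFamily G (eternalDomNum G) F ∧
      ∃ D ∈ F, ∀ v ∈ D, (epn G v D).Nonempty := by
  obtain ⟨F, hF⟩ := exists_isEternalGuardFamily_eternalDomNum G
  have hmin : ∀ E ∈ F, IsMinDominating G E := fun E hE =>
    .of_card_eq_domNum (hF.2.1 E hE).1 ((hF.2.1 E hE).2.trans heq.symm)
  obtain ⟨D, hDF, hDleast⟩ := F.exists_min_image (guardPotential G) F.toFinite hF.1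
  refine ⟨F, hF, D, hDF, fun v hv => Set.nonempty_iff_ne_empty.mpr fun hbad => ?_⟩
  obtain ⟨r, hr⟩ := (G.degree_pos_iff_exists_adj v).mp (hiso v)
  have hrD := (hmin D hDF).notMem_of_adj_of_epn_eq_empty hv hbad hr
  obtain ⟨u, hu, -, hD'F⟩ := hF.2.2 D hDF r hrD
  exact ((hmin D hDF).guardPotential_insert_erase_lt hv hbad hr (hΔ r) hu
    (hF.2.1 _ hD'F).1).not_ge (hDleast _ hD'F)
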